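/- arXiv:2305.12867 — 4 statements merged into one kernel-verified Lean document; each statement's English description precedes it below -/
import Mathlib

section
/- Let Y ⊆ ℝ² be a nonempty finite set and let y ∈ Y be nondominated (there is no y' ∈ Y with y' ≤ y componentwise and y' ≠ y). If there exists a weight λ = (λ₁, λ₂) with λ₁, λ₂ ≥ 0, λ₁ + λ₂ = 1, such that y minimizes λ₁·z₁ + λ₂·z₂ over all z ∈ Y, then there exists a weight μ = (μ₁, μ₂) with μ₁, μ₂ > 0 and μ₁ + μ₂ = 1 such that y minimizes μ₁·z₁ + μ₂·z₂ over all z ∈ Y. (Every weakly supported nondominated point of a biobjective problem with finitely many outcomes is supported nondominated.) -/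
lemma aux_supported {Y : Set (Fin 2 → ℝ)} (hfin : Y.Finite) {y : Fin 2 → ℝ} (hy : y ∈ Y)
    (i j : Fin 2)
    (hmin : ∀ z ∈ Y, y i ≤ z i)
    (hnd2 : ∀ z ∈ Y, z i = y i → y j ≤ z j) :
    ∃ ε : ℝ, 0 < ε ∧ ε < 1 ∧ ∀ z ∈ Y,
      (1 - ε) * y i + ε * y j ≤ (1 - ε) * z i + ε * z j := by
  classical
  set F := hfin.toFinset with hF
  have hyF : y ∈ F := hfin.mem_toFinset.mpr hy
  by_cases hc : ∃ z ∈ Y, y i < z i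
  · set G := F.filter (fun z => y i < z i) with hG
    obtain ⟨z0, hz0Y, hz0lt⟩ := hc
    have hGne : G.Nonempty :=
      ⟨z0, Finset.mem_filter.mpr ⟨hfin.mem_toFinset.mpr hz0Y, hz0lt⟩⟩
    set δ := G.inf' hGne (fun z => z i - y i) with hδ
    have hδpos : 0 < δ := by
      rw [hδ, Finset.lt_inf'_iff]
      intro b hb
      have := (Finset.mem_filter.mp hb).2
      linarith
    set M := F.sup' ⟨y, hyF⟩ (fun z => y j - z j) with hM
    have hM0 : 0 ≤ M := by
      have h := Finset.le_sup' (fun z => y j - z j) hyF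
      simp only [sub_self] at h
      linarith
    set C := M + 1 with hC
    have hCpos : 0 < C := by linarith
    set e := δ / (C + δ) with he
    have hepos : 0 < e := by positivity
    have he1 : e < 1 := by
      rw [he, div_lt_one (by linarith)]; linarith
    have hee : e * (C + δ) = δ := div_mul_cancel₀ δ (by positivity)
    refine ⟨e, hepos, he1, ?_⟩
    intro z hz
    have hzF : z ∈ F := hfin.mem_toFinset.mpr hz
    have h1 : y i ≤ z i := hmin z hz
    rcases eq_or_lt_of_le h1 with heq | hlt
    · have h2 := hnd2 z hz heq.symm
      nlinarith [mul_nonneg hepos.le (sub_nonneg.mpr h2)]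
    · have hzG : z ∈ G := Finset.mem_filter.mpr ⟨hzF, hlt⟩
      have hδle : δ ≤ z i - y i := Finset.inf'_le (fun z => z i - y i) hzG
      have hMle : y j - z j ≤ M := Finset.le_sup' (fun z => y j - z j) hzF
      nlinarith [mul_nonneg (sub_nonneg.mpr he1.le) (sub_nonneg.mpr hδle),
        mul_nonneg hepos.le (by linarith : (0:ℝ) ≤ z j - y j + M),
        mul_nonneg hepos.le (by linarith : (0:ℝ) ≤ C - M)]
  · push_neg at hc
    refine ⟨1/2, by norm_num, by norm_num, ?_⟩
    intro z hz
    have h1 : z i = y i := le_antisymm (hc z hz) (hmin z hz)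
    have h2 : y j ≤ z j := hnd2 z hz h1
    rw [h1]; nlinarith

theorem stmt_0 (Y : Set (Fin 2 → ℝ)) (hfin : Y.Finite) (hne : Y.Nonempty)
    (y : Fin 2 → ℝ) (hy : y ∈ Y)
    (hnd : ¬ ∃ y' ∈ Y, y' ≤ y ∧ y' ≠ y)
    (hws : ∃ l : Fin 2 → ℝ, (0 ≤ l 0 ∧ 0 ≤ l 1) ∧ l 0 + l 1 = 1 ∧
      ∀ z ∈ Y, l 0 * y 0 + l 1 * y 1 ≤ l 0 * z 0 + l 1 * z 1) :
    ∃ m : Fin 2 → ℝ, (0 < m 0 ∧ 0 < m 1) ∧ m 0 + m 1 = 1 ∧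
      ∀ z ∈ Y, m 0 * y 0 + m 1 * y 1 ≤ m 0 * z 0 + m 1 * z 1 := by
  push_neg at hnd
  obtain ⟨l, ⟨hl0, hl1⟩, hsum, hmin⟩ := hws
  rcases lt_or_eq_of_le hl0 with hl0' | hl0'
  · rcases lt_or_eq_of_le hl1 with hl1' | hl1'
    · exact ⟨l, ⟨hl0', hl1'⟩, hsum, hmin⟩
    · -- l 1 = 0, l 0 = 1 : y minimizes coordinate 0
      have hl10 : l 1 = 0 := hl1'.symm
      have hl01 : l 0 = 1 := by linarith
      have hmin0 : ∀ z ∈ Y, y 0 ≤ z 0 := by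
        intro z hz
        have := hmin z hz
        rw [hl10, hl01] at this; linarith
      have hnd2 : ∀ z ∈ Y, z 0 = y 0 → y 1 ≤ z 1 := by
        intro z hz h0
        by_contra h
        push_neg at h
        have hle : z ≤ y := by
          intro k
          fin_cases k
          · exact le_of_eq h0
          · exact h.le
        have := hnd z hz hle
        rw [this] at h
        exact lt_irrefl _ h
      obtain ⟨ε, hε0, hε1, hbd⟩ := aux_supported hfin hy 0 1 hmin0 hnd2
      refine ⟨![1 - ε, ε], ⟨by simpa using by linarith, by simpa using hε0⟩,
        by simp, ?_⟩
      intro z hz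
      have := hbd z hz
      simp only [Matrix.cons_val_zero, Matrix.cons_val_one, Matrix.head_cons]
      linarith
  · -- l 0 = 0, l 1 = 1 : y minimizes coordinate 1
    have hl00 : l 0 = 0 := hl0'.symm
    have hl11 : l 1 = 1 := by linarith
    have hmin1 : ∀ z ∈ Y, y 1 ≤ z 1 := by
      intro z hz
      have := hmin z hz
      rw [hl00, hl11] at this; linarith
    have hnd2 : ∀ z ∈ Y, z 1 = y 1 → y 0 ≤ z 0 := by
      intro z hz h1
      by_contra h
      push_neg at h
      have hle : z ≤ y := by
        intro k
        fin_cases k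
        · exact h.le
        · exact le_of_eq h1
      have := hnd z hz hle
      rw [this] at h
      exact lt_irrefl _ h
    obtain ⟨ε, hε0, hε1, hbd⟩ := aux_supported hfin hy 1 0 hmin1 hnd2
    refine ⟨![ε, 1 - ε], ⟨by simpa using hε0, by simpa using by linarith⟩,
      by simp, ?_⟩
    intro z hz
    have := hbd z hz
    simp only [Matrix.cons_val_zero, Matrix.cons_val_one, Matrix.head_cons]
    linarith
end

section
/- Let Y ⊆ ℝᵈ be a nonempty finite set and suppose y ∈ Y minimizes λᵀz over Y for some λ ∈ ℝᵈ with all components strictly positive. Then y lies on the nondominated frontier of conv(Y_N), i.e., conv(Y_N) ∩ (y − ℝᵈ_{≥0}) = {y}, where Y_N is the set of nondominated points of Y. -/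
theorem stmt_7 (d : ℕ) (Y : Set (Fin d → ℝ)) (hfin : Y.Finite) (hne : Y.Nonempty)
    (y : Fin d → ℝ) (hy : y ∈ Y) (l : Fin d → ℝ) (hl : ∀ i, 0 < l i)
    (hmin : ∀ z ∈ Y, (∑ i, l i * y i) ≤ ∑ i, l i * z i) :
    convexHull ℝ {v ∈ Y | ¬ ∃ y' ∈ Y, y' ≤ v ∧ y' ≠ v} ∩
      {z : Fin d → ℝ | ∃ r : Fin d → ℝ, 0 ≤ r ∧ z = y - r} = {y} := by
  set f : (Fin d → ℝ) → ℝ := fun z => ∑ i, l i * z i with hf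
  have hflin : IsLinearMap ℝ f := by
    constructor
    · intro a b
      simp [hf, mul_add, Finset.sum_add_distrib]
    · intro c a
      simp only [hf, smul_eq_mul, Finset.mul_sum]
      exact Finset.sum_congr rfl fun i _ => by simp [smul_eq_mul]; ring
  -- y is nondominated
  have hyN : y ∈ {v ∈ Y | ¬ ∃ y' ∈ Y, y' ≤ v ∧ y' ≠ v} := by
    refine ⟨hy, ?_⟩
    rintro ⟨y', hy', hle, hne'⟩
    have hex : ∃ i, y' i < y i := by
      by_contra h
      push_neg at h
      exact hne' (le_antisymm hle fun i => h i)
    obtain ⟨i, hi⟩ := hex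
    have : f y' < f y := by
      apply Finset.sum_lt_sum
      · intro j _
        exact mul_le_mul_of_nonneg_left (hle j) (hl j).le
      · exact ⟨i, Finset.mem_univ i, mul_lt_mul_of_pos_left hi (hl i)⟩
    exact absurd (hmin y' hy') (not_le.mpr this)
  have key : ∀ z ∈ convexHull ℝ {v ∈ Y | ¬ ∃ y' ∈ Y, y' ≤ v ∧ y' ≠ v}, f y ≤ f z :=
    fun z hz => convexHull_min (fun v hv => hmin v hv.1) (convex_halfSpace_ge hflin (f y)) hz
  ext z
  constructor
  · rintro ⟨hz, r, hr, rfl⟩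
    have h1 : f y ≤ f (y - r) := key _ hz
    have h2 : f (y - r) = f y - f r := (IsLinearMap.mk' f hflin).map_sub y r
    have h3 : f r ≤ 0 := by linarith [h1, h2.symm ▸ h1]
    have h4 : ∀ i ∈ Finset.univ, 0 ≤ l i * r i :=
      fun i _ => mul_nonneg (hl i).le (hr i)
    have h5 : f r = 0 := le_antisymm h3 (Finset.sum_nonneg h4)
    have h6 : ∀ i ∈ Finset.univ, l i * r i = 0 :=
      (Finset.sum_eq_zero_iff_of_nonneg h4).mp h5
    have h7 : r = 0 := by
      funext i
      have := h6 i (Finset.mem_univ i)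
      have : r i = 0 := by
        rcases mul_eq_zero.mp this with h | h
        · exact absurd h (hl i).ne'
        · exact h
      simpa using this
    simp [h7]
  · rintro rfl
    exact ⟨subset_convexHull ℝ _ hyN, 0, le_refl _, by simp⟩
end

section
/- Let Y ⊆ ℝᵈ be a nonempty finite set with nondominated set Y_N, and let y ∈ conv(Y_N) satisfy conv(Y_N) ∩ (y − ℝᵈ_{≥0}) = {y} (y is on the nondominated frontier). Then there exists λ ∈ ℝᵈ with all components strictly positive such that λᵀy ≤ λᵀz for all z ∈ conv(Y_N). -/
/-!
The cone `C` generated by the vectors `y - n`, `n ∈ Y_N`, is finitely generated and therefore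
closed: by Carathéodory's theorem for cones each of its points lies in the cone of a linearly
independent subfamily, and such a cone is the image of a closed orthant under an injective linear
map. The frontier condition says exactly that `C` meets the nonnegative orthant only in `0`, so `C`
is disjoint from the standard simplex. Separating the compact simplex from the closed cone gives a
functional that is nonnegative on `C` and negative on every unit vector; its negative is `λ`.
-/

open Finset Pointwise

namespace PointedCone

variable {𝕜 E : Type*} [Field 𝕜] [LinearOrder 𝕜] [IsStrictOrderedRing 𝕜] [AddCommGroup E]
  [Module 𝕜 E]

lemma mem_hull_finset {t : Finset E} {x : E} :
    x ∈ hull 𝕜 (t : Set E) ↔ ∃ μ : E → 𝕜, (∀ v ∈ t, 0 ≤ μ v) ∧ ∑ v ∈ t, μ v • v = x := by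
  constructor
  · intro hx
    obtain ⟨f, -, rfl⟩ := Submodule.mem_span_finset.1 hx
    exact ⟨fun v => f v, fun v _ => (f v).2, rfl⟩
  · rintro ⟨μ, hμ, rfl⟩
    exact Submodule.sum_mem _ fun v hv =>
      Submodule.smul_mem _ (⟨μ v, hμ v hv⟩ : {c : 𝕜 // 0 ≤ c}) (Submodule.subset_span hv)

lemma exists_pos_relation_of_not_linearIndepOn {t : Finset E}
    (h : ¬LinearIndepOn 𝕜 id (t : Set E)) :
    ∃ g : E → 𝕜, ∑ v ∈ t, g v • v = 0 ∧ ∃ w ∈ t, 0 < g w := by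
  obtain ⟨g, hg, w, hw, hgw⟩ := not_linearIndepOn_finset_iff.1 h
  rcases hgw.lt_or_gt with hneg | hpos
  · refine ⟨-g, ?_, w, hw, neg_pos.2 hneg⟩
    simpa only [Pi.neg_apply, neg_smul, sum_neg_distrib, neg_eq_zero, id] using hg
  · exact ⟨g, by simpa only [id] using hg, w, hw, hpos⟩

lemma mem_hull_erase [DecidableEq E] {t : Finset E} (h : ¬LinearIndepOn 𝕜 id (t : Set E))
    {x : E} (hx : x ∈ hull 𝕜 (t : Set E)) : ∃ w ∈ t, x ∈ hull 𝕜 (t.erase w : Set E) := by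
  obtain ⟨μ, hμ, rfl⟩ := mem_hull_finset.1 hx
  obtain ⟨g, hg, hgpos⟩ := exists_pos_relation_of_not_linearIndepOn h
  obtain ⟨w, hw, hmin⟩ : ∃ w ∈ {v ∈ t | 0 < g v}, ∀ v ∈ {v ∈ t | 0 < g v},
      μ w / g w ≤ μ v / g v :=
    exists_min_image _ _ (by simpa only [Finset.Nonempty, mem_filter] using hgpos)
  rw [mem_filter] at hw
  -- Subtract the largest multiple of the relation `g` that keeps all coefficients nonnegative;
  -- the coefficient of `w` then vanishes.
  set k : E → 𝕜 := fun v => μ v - μ w / g w * g v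
  have hkw : k w = 0 := by simp [k, hw.2.ne']
  refine ⟨w, hw.1, mem_hull_finset.2 ⟨k, fun v hv => ?_, ?_⟩⟩
  · have hvt := mem_of_mem_erase hv
    simp only [k, sub_nonneg]
    by_cases hgv : 0 < g v
    · calc μ w / g w * g v ≤ μ v / g v * g v :=
          mul_le_mul_of_nonneg_right (hmin v (mem_filter.2 ⟨hvt, hgv⟩)) hgv.le
        _ = μ v := div_mul_cancel₀ _ hgv.ne'
    · calc μ w / g w * g v ≤ 0 :=
          mul_nonpos_of_nonneg_of_nonpos (div_nonneg (hμ w hw.1) hw.2.le) (not_lt.1 hgv)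
        _ ≤ μ v := hμ v hvt
  · rw [sum_erase _ (by rw [hkw, zero_smul])]
    simp only [k, sub_smul, mul_smul, sum_sub_distrib, ← smul_sum, hg, smul_zero, sub_zero]

theorem exists_linearIndepOn_of_mem_hull {t : Finset E} {x : E} (hx : x ∈ hull 𝕜 (t : Set E)) :
    ∃ u ⊆ t, LinearIndepOn 𝕜 id (u : Set E) ∧ x ∈ hull 𝕜 (u : Set E) := by
  classical
  induction t using Finset.strongInduction with
  | H t ih =>
    by_cases h : LinearIndepOn 𝕜 id (t : Set E)
    · exact ⟨t, subset_rfl, h, hx⟩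
    obtain ⟨w, hw, hxw⟩ := mem_hull_erase h hx
    obtain ⟨u, hu, hli, hxu⟩ := ih _ (erase_ssubset hw) hxw
    exact ⟨u, hu.trans (erase_subset w t), hli, hxu⟩

lemma eq_zero_or_exists_pos_mem_smul_convexHull {s : Set E} {x : E} (hx : x ∈ hull 𝕜 s) :
    x = 0 ∨ ∃ r : 𝕜, 0 < r ∧ x ∈ r • convexHull 𝕜 s := by
  induction hx using Submodule.span_induction with
  | mem x hx => exact .inr ⟨1, one_pos, by simpa using subset_convexHull 𝕜 s hx⟩
  | zero => exact .inl rfl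
  | add x y _ _ hx hy =>
    rcases hx with rfl | ⟨r, hr, c, hc, rfl⟩
    · simpa using hy
    rcases hy with rfl | ⟨q, hq, b, hb, rfl⟩
    · simpa using Or.inr ⟨r, hr, c, hc, rfl⟩
    refine .inr ⟨r + q, by positivity, (r / (r + q)) • c + (q / (r + q)) • b,
      convex_convexHull 𝕜 s hc hb (by positivity) (by positivity) ?_, ?_⟩
    · field_simp
    · simp only [smul_add, smul_smul]
      congr 2 <;> field_simp
  | smul a x _ hx =>
    rcases hx with rfl | ⟨r, hr, c, hc, rfl⟩
    · simp
    rcases (a.2 : (0 : 𝕜) ≤ a).eq_or_lt with ha | ha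
    · left
      rw [show a = 0 from Subtype.ext ha.symm, zero_smul]
    · exact .inr ⟨a * r, mul_pos ha hr, c, hc, mul_smul (a : 𝕜) r c⟩

section Topology

variable {E : Type*} [AddCommGroup E] [Module ℝ E] [TopologicalSpace E] [IsTopologicalAddGroup E]
  [ContinuousSMul ℝ E] [T2Space E]

theorem isClosed_hull_of_linearIndepOn {u : Finset E} (hu : LinearIndepOn ℝ id (u : Set E)) :
    IsClosed (hull ℝ (u : Set E) : Set E) := by
  classical
  set φ := Fintype.linearCombination ℝ (fun v : u => (v : E))
  have hφ : Topology.IsClosedEmbedding φ :=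
    LinearMap.isClosedEmbedding_of_injective
      (LinearMap.ker_eq_bot.2 hu.fintypeLinearCombination_injective)
  have himage : (hull ℝ (u : Set E) : Set E) = φ '' Set.Ici 0 := by
    ext x
    simp only [SetLike.mem_coe, mem_hull_finset, Set.mem_image, Set.mem_Ici, φ,
      Fintype.linearCombination_apply]
    constructor
    · rintro ⟨μ, hμ, rfl⟩
      exact ⟨fun v => μ v, fun v => hμ v v.2, sum_coe_sort u fun v => μ v • v⟩
    · rintro ⟨g, hg, rfl⟩
      refine ⟨fun v => if hv : v ∈ u then g ⟨v, hv⟩ else 0,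
        fun v hv => by simpa [hv] using hg ⟨v, hv⟩, ?_⟩
      rw [← sum_coe_sort u]
      simp
  rw [himage]
  exact hφ.isClosedMap _ isClosed_Ici

theorem isClosed_hull_of_finite {s : Set E} (hs : s.Finite) : IsClosed (hull ℝ s : Set E) := by
  classical
  obtain ⟨t, rfl⟩ := hs.exists_finset_coe
  set B : Finset (Finset E) := {u ∈ t.powerset | LinearIndepOn ℝ id (u : Set E)}
  have hunion : (hull ℝ (t : Set E) : Set E) = ⋃ u ∈ B, (hull ℝ (u : Set E) : Set E) := by
    refine subset_antisymm (fun x hx => ?_) (Set.iUnion₂_subset fun u hu => ?_)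
    · obtain ⟨u, hut, hli, hxu⟩ := exists_linearIndepOn_of_mem_hull hx
      exact Set.mem_biUnion (mem_filter.2 ⟨mem_powerset.2 hut, hli⟩) hxu
    · exact Submodule.span_mono (coe_subset.2 (mem_powerset.1 (mem_filter.1 hu).1))
  rw [hunion]
  exact B.finite_toSet.isClosed_biUnion fun u hu =>
    isClosed_hull_of_linearIndepOn (mem_filter.1 hu).2

end Topology

end PointedCone

open PointedCone

lemma eq_zero_of_nonneg_of_mem_hull_sub {𝕜 E : Type*} [Field 𝕜] [LinearOrder 𝕜]
    [IsStrictOrderedRing 𝕜] [AddCommGroup E] [PartialOrder E] [Module 𝕜 E] [PosSMulMono 𝕜 E]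
    {S : Set E} {y : E}
    (hfront : convexHull 𝕜 S ∩ {z | ∃ r, 0 ≤ r ∧ z = y - r} = {y}) {x : E}
    (hx : x ∈ hull 𝕜 ({y} - S)) (hx0 : 0 ≤ x) : x = 0 := by
  rcases eq_zero_or_exists_pos_mem_smul_convexHull hx with h | ⟨r, hr, c, hc, rfl⟩
  · exact h
  rw [convexHull_sub, convexHull_singleton, Set.singleton_sub] at hc
  obtain ⟨s, hs, rfl⟩ := hc
  have hys : 0 ≤ y - s := by
    have := smul_nonneg (inv_nonneg.2 hr.le) hx0
    rwa [smul_smul, inv_mul_cancel₀ hr.ne', one_smul] at this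
  have hsy : s ∈ ({y} : Set E) := hfront ▸ ⟨hs, y - s, hys, (sub_sub_cancel y s).symm⟩
  simp [Set.mem_singleton_iff.1 hsy]

lemma apply_eq_sum_apply_single_one_mul {ι R F : Type*} [Fintype ι] [DecidableEq ι]
    [CommSemiring R] [FunLike F (ι → R) R] [LinearMapClass F R (ι → R) R] (f : F) (x : ι → R) :
    f x = ∑ i, f (Pi.single i 1) * x i := by
  conv_lhs => rw [← Finset.univ_sum_single x]
  rw [map_sum]
  refine Finset.sum_congr rfl fun i _ => ?_
  rw [mul_comm, ← smul_eq_mul, ← map_smul, ← Pi.single_smul, smul_eq_mul, mul_one]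

theorem stmt_8_general (d : ℕ) (Y : Set (Fin d → ℝ)) (hfin : Y.Finite)
    (y : Fin d → ℝ)
    (hfront : convexHull ℝ {v ∈ Y | ¬ ∃ y' ∈ Y, y' ≤ v ∧ y' ≠ v} ∩
      {z : Fin d → ℝ | ∃ r : Fin d → ℝ, 0 ≤ r ∧ z = y - r} = {y}) :
    ∃ l : Fin d → ℝ, (∀ i, 0 < l i) ∧
      ∀ z ∈ convexHull ℝ {v ∈ Y | ¬ ∃ y' ∈ Y, y' ≤ v ∧ y' ≠ v},
        (∑ i, l i * y i) ≤ ∑ i, l i * z i := by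
  set N := {v ∈ Y | ¬ ∃ y' ∈ Y, y' ≤ v ∧ y' ≠ v}
  have hclosed : IsClosed (hull ℝ ({y} - N) : Set (Fin d → ℝ)) :=
    isClosed_hull_of_finite ((Set.finite_singleton y).sub (hfin.subset (Set.sep_subset _ _)))
  have hdisj : Disjoint (stdSimplex ℝ (Fin d)) (hull ℝ ({y} - N) : Set (Fin d → ℝ)) := by
    refine Set.disjoint_left.2 fun x hxΔ hxC => ?_
    have hx0 : x = 0 := eq_zero_of_nonneg_of_mem_hull_sub hfront hxC hxΔ.1
    simpa [hx0] using hxΔ.2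
  obtain ⟨f, hfC, hfΔ⟩ := ProperCone.hyperplane_separation (ClosedSubmodule.mk _ hclosed)
    (convex_stdSimplex ℝ (Fin d)) (isCompact_stdSimplex ℝ (Fin d)) hdisj
  refine ⟨fun i => -f (Pi.single i 1), fun i => neg_pos.2 (hfΔ _ (single_mem_stdSimplex ℝ i)),
    fun z hz => ?_⟩
  have hN : N ⊆ {z | f z ≤ f y} := fun n hn => by
    simpa using hfC (y - n) (Submodule.subset_span (Set.sub_mem_sub rfl hn))
  have hfz : f z ≤ f y := convexHull_min hN (convex_halfSpace_le f.isLinear (f y)) hz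
  simp only [neg_mul, sum_neg_distrib, ← apply_eq_sum_apply_single_one_mul]
  linarith

theorem stmt_8 (d : ℕ) (Y : Set (Fin d → ℝ)) (hfin : Y.Finite) (hne : Y.Nonempty)
    (y : Fin d → ℝ)
    (hy : y ∈ convexHull ℝ {v ∈ Y | ¬ ∃ y' ∈ Y, y' ≤ v ∧ y' ≠ v})
    (hfront : convexHull ℝ {v ∈ Y | ¬ ∃ y' ∈ Y, y' ≤ v ∧ y' ≠ v} ∩
      {z : Fin d → ℝ | ∃ r : Fin d → ℝ, 0 ≤ r ∧ z = y - r} = {y}) :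
    ∃ l : Fin d → ℝ, (∀ i, 0 < l i) ∧
      ∀ z ∈ convexHull ℝ {v ∈ Y | ¬ ∃ y' ∈ Y, y' ≤ v ∧ y' ≠ v},
        (∑ i, l i * y i) ≤ ∑ i, l i * z i :=
  stmt_8_general d Y hfin y hfront
end

section
/- Consider the finite set Y ⊆ ℝ³ consisting of the ten points y¹=(8,16,6), y²=(12,12,6), y³=(16,8,10), s¹=(9,15,7), s²=(10,14,8), s³=(11,13,9), s⁴=(13,11,7), s⁵=(14,10,8), s⁶=(15,9,9), d¹=(12,12,10). Then s¹=(9,15,7) is nondominated in Y, it minimizes the weighted sum (1/2)z₁ + (1/2)z₂ + 0·z₃ over Y, but there is no weight vector λ ∈ ℝ³ with λ₁,λ₂,λ₃ > 0 such that s¹ minimizes λ₁z₁ + λ₂z₂ + λ₃z₃ over Y. In particular, the set of supported nondominated points of Y is a proper subset of the set of weakly supported nondominated points of Y. -/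
theorem stmt_9 :
    let Y : Set (Fin 3 → ℝ) :=
      {![8,16,6], ![12,12,6], ![16,8,10], ![9,15,7], ![10,14,8],
       ![11,13,9], ![13,11,7], ![14,10,8], ![15,9,9], ![12,12,10]}
    let s1 : Fin 3 → ℝ := ![9,15,7]
    (¬ ∃ y' ∈ Y, y' ≤ s1 ∧ y' ≠ s1) ∧
    (∀ z ∈ Y, (1/2) * s1 0 + (1/2) * s1 1 + 0 * s1 2 ≤
      (1/2) * z 0 + (1/2) * z 1 + 0 * z 2) ∧
    (¬ ∃ l : Fin 3 → ℝ, (∀ i, 0 < l i) ∧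
      ∀ z ∈ Y, (∑ i, l i * s1 i) ≤ ∑ i, l i * z i) ∧
    ({y ∈ Y | (¬ ∃ y' ∈ Y, y' ≤ y ∧ y' ≠ y) ∧
        ∃ l : Fin 3 → ℝ, (∀ i, 0 < l i) ∧
          ∀ z ∈ Y, (∑ i, l i * y i) ≤ ∑ i, l i * z i} ⊂
     {y ∈ Y | (¬ ∃ y' ∈ Y, y' ≤ y ∧ y' ≠ y) ∧
        ∃ l : Fin 3 → ℝ, 0 ≤ l ∧ l ≠ 0 ∧
          ∀ z ∈ Y, (∑ i, l i * y i) ≤ ∑ i, l i * z i}) := by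
  intro Y s1
  have hnd : ¬ ∃ y' ∈ Y, y' ≤ s1 ∧ y' ≠ s1 := by
    rintro ⟨y', hy', hle, hne⟩
    simp only [Y, Set.mem_insert_iff, Set.mem_singleton_iff] at hy'
    rcases hy' with h|h|h|h|h|h|h|h|h|h <;> subst h <;>
      first
      | exact hne rfl
      | · have h0 := hle 0
          have h1 := hle 1
          have h2 := hle 2
          simp only [s1, Matrix.cons_val_zero, Matrix.cons_val_one, Matrix.head_cons,
            Matrix.cons_val_two, Matrix.tail_cons] at h0 h1 h2
          linarith
  have hw : ∀ z ∈ Y, (1/2) * s1 0 + (1/2) * s1 1 + 0 * s1 2 ≤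
      (1/2) * z 0 + (1/2) * z 1 + 0 * z 2 := by
    intro z hz
    simp only [Y, Set.mem_insert_iff, Set.mem_singleton_iff] at hz
    rcases hz with h|h|h|h|h|h|h|h|h|h <;> subst h <;> norm_num [s1]
  have hns : ¬ ∃ l : Fin 3 → ℝ, (∀ i, 0 < l i) ∧
      ∀ z ∈ Y, (∑ i, l i * s1 i) ≤ ∑ i, l i * z i := by
    rintro ⟨l, hpos, hle⟩
    have h1 := hle ![8,16,6] (by simp [Y])
    have h2 := hle ![12,12,6] (by simp [Y])
    simp only [s1, Fin.sum_univ_three, Matrix.cons_val_zero, Matrix.cons_val_one,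
      Matrix.head_cons, Matrix.cons_val_two, Matrix.tail_cons] at h1 h2
    have c2 := hpos 2
    linarith
  refine ⟨hnd, hw, hns, ?_⟩
  rw [Set.ssubset_def]
  constructor
  · rintro y ⟨hy, hnd', l, hpos, hle⟩
    exact ⟨hy, hnd', l, fun i => le_of_lt (hpos i), fun h => (hpos 0).ne' (congrFun h 0),
      hle⟩
  · intro hsub
    have hs1mem : s1 ∈ Y := by simp [Y, s1]
    have hrhs : s1 ∈ {y ∈ Y | (¬ ∃ y' ∈ Y, y' ≤ y ∧ y' ≠ y) ∧
        ∃ l : Fin 3 → ℝ, 0 ≤ l ∧ l ≠ 0 ∧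
          ∀ z ∈ Y, (∑ i, l i * y i) ≤ ∑ i, l i * z i} := by
      refine ⟨hs1mem, hnd, ![1/2, 1/2, 0], ?_, ?_, ?_⟩
      · intro i; fin_cases i <;> norm_num
      · intro h
        have := congrFun h 0
        norm_num at this
      · intro z hz
        have := hw z hz
        simpa [Fin.sum_univ_three] using this
    have hlhs := hsub hrhs
    exact hns hlhs.2.2
end
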